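/- arXiv:1907.11590 — 2 statements merged into one kernel-verified Lean document; each statement's English description precedes it below -/
import Mathlib

section
/- Every finite simple graph G with no isolated vertices satisfying γ_t(G) = 2μ*(G) has minimum degree one or two, i.e., 1 ≤ δ(G) ≤ 2. -/
open SimpleGraph

namespace TotalDomMM

variable {V : Type*}

/-- `M` is a maximal matching of `G`: a matching not contained in a larger matching. -/
def IsMaximalMatching (G : SimpleGraph V) (M : G.Subgraph) : Prop :=
  M.IsMatching ∧
    ∀ M' : G.Subgraph, M'.IsMatching → M.edgeSet ⊆ M'.edgeSet → M.edgeSet = M'.edgeSet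

/-- `μ*(G)`: the minimum cardinality of a maximal matching of `G`. -/
noncomputable def muStar (G : SimpleGraph V) : ℕ :=
  sInf {n | ∃ M : G.Subgraph, IsMaximalMatching G M ∧ M.edgeSet.ncard = n}

/-- `S` is a total dominating set of `G`: every vertex has a neighbor in `S`. -/
def IsTotalDomSet (G : SimpleGraph V) (S : Set V) : Prop :=
  ∀ v : V, ∃ u ∈ S, G.Adj v u

/-- `γ_t(G)`: the minimum cardinality of a total dominating set of `G`. -/
noncomputable def gammaT (G : SimpleGraph V) : ℕ :=
  sInf {n | ∃ S : Set V, IsTotalDomSet G S ∧ S.ncard = n}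

/-- `δ(G)`: the minimum degree of `G`. -/
noncomputable def minDeg (G : SimpleGraph V) : ℕ :=
  sInf {k | ∃ v : V, (G.neighborSet v).ncard = k}

/-- `G` has no isolated vertices. -/
def NoIsolated (G : SimpleGraph V) : Prop := ∀ v : V, ∃ u : V, G.Adj v u

/-- `sup(G)`: the set of support vertices, i.e. vertices adjacent to a leaf
(a vertex of degree one). -/
def supSet (G : SimpleGraph V) : Set V :=
  {v | ∃ u, G.Adj v u ∧ (G.neighborSet u).ncard = 1}

/-- `S⁺(G)`: support vertices adjacent to some support vertex. -/
def supPlus (G : SimpleGraph V) : Set V :=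
  {v ∈ supSet G | ∃ u ∈ supSet G, G.Adj v u}

/-- `S⁻(G) = sup(G) \ S⁺(G)`. -/
def supMinus (G : SimpleGraph V) : Set V := supSet G \ supPlus G

/-- The set of vertices covered by a set of edges. -/
def edgeVerts (E : Set (Sym2 V)) : Set V := {v | ∃ e ∈ E, v ∈ e}

/-- Conditions (i)-(ii) (minimum degree two case) for a matching `M`:
(i) for every `v ∈ V(M)`, its partner `M_p v` is the unique neighbor of `v` in `V(M)`;
(ii) distinct `u, v ∈ V(M)` with a common neighbor force a vertex whose neighborhood is
exactly `{M_p u, M_p v}`. -/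
def MatchingCond (G : SimpleGraph V) (M : G.Subgraph) : Prop :=
  (∀ v ∈ M.verts, ∀ w, M.Adj v w → ∀ u ∈ M.verts, G.Adj v u → u = w) ∧
  (∀ u v : V, u ∈ M.verts → v ∈ M.verts → u ≠ v →
    (∃ w, G.Adj u w ∧ G.Adj v w) →
    ∀ u' v' : V, M.Adj u u' → M.Adj v v' → ∃ x : V, G.neighborSet x = {u', v'})

/-- The matching `M` is partitioned as `M = M⁺ ∪ M⁻ ∪ M*` satisfying conditions (i)-(iv)
of the main theorem:
(i) `M⁺` is a perfect matching of the subgraph induced by `S⁺(G)`;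
(ii) `S⁻(G) ⊆ V(M⁻)` and every edge of `M⁻` joins a vertex of `S⁻(G)` with a vertex of
`V(G) \ sup(G)`;
(iii) for `v ∈ S⁻(G) ∪ V(M*)`, the partner `M_p v` is the unique neighbor of `v` in `V(M)`;
(iv) for distinct `u, v ∈ S⁻(G) ∪ V(M*)` with a common neighbor, some vertex has
neighborhood exactly `{M_p u, M_p v}`. -/
def PartitionCond (G : SimpleGraph V) (M : G.Subgraph) (Mp Mm Ms : Set (Sym2 V)) : Prop :=
  Mp ∪ Mm ∪ Ms = M.edgeSet ∧
  Disjoint Mp Mm ∧ Disjoint Mp Ms ∧ Disjoint Mm Ms ∧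
  -- (i)
  (∀ u v : V, s(u, v) ∈ Mp → u ∈ supPlus G) ∧
  supPlus G ⊆ edgeVerts Mp ∧
  -- (ii)
  supMinus G ⊆ edgeVerts Mm ∧
  (∀ u v : V, s(u, v) ∈ Mm →
    (u ∈ supMinus G ∧ v ∉ supSet G) ∨ (v ∈ supMinus G ∧ u ∉ supSet G)) ∧
  -- (iii)
  (∀ v ∈ supMinus G ∪ edgeVerts Ms, ∀ w, M.Adj v w → ∀ u ∈ M.verts, G.Adj v u → u = w) ∧
  -- (iv)
  (∀ u v : V, u ∈ supMinus G ∪ edgeVerts Ms → v ∈ supMinus G ∪ edgeVerts Ms → u ≠ v →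
    (∃ w, G.Adj u w ∧ G.Adj v w) →
    ∀ u' v' : V, M.Adj u u' → M.Adj v v' → ∃ x : V, G.neighborSet x = {u', v'})

/-- The graph with vertices `u, v, w_1, …, w_n` (here `u = Sum.inr 0`, `v = Sum.inr 1`,
`w_i = Sum.inl i`) and edges `uv` and `uw_i, vw_i` for all `i`: `n` triangles sharing
the common edge `uv`. -/
def kGraph (n : ℕ) : SimpleGraph (Fin n ⊕ Fin 2) :=
  SimpleGraph.fromRel (fun a b => ¬(a.isLeft = true ∧ b.isLeft = true))

/-- `G` belongs to the family `𝒦` of graphs consisting of triangles sharing a common edge. -/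
def InK (G : SimpleGraph V) : Prop := ∃ n : ℕ, 1 ≤ n ∧ Nonempty (G ≃g kGraph n)

/-- `G` is a 6-cycle. -/
def IsC6 (G : SimpleGraph V) : Prop := Nonempty (G ≃g SimpleGraph.cycleGraph 6)

/-- `a, b, c, d, e, f` (in this cyclic order) form an induced 6-cycle in `G`. -/
def IsInducedC6 (G : SimpleGraph V) (a b c d e f : V) : Prop :=
  List.Pairwise (· ≠ ·) [a, b, c, d, e, f] ∧
  G.Adj a b ∧ G.Adj b c ∧ G.Adj c d ∧ G.Adj d e ∧ G.Adj e f ∧ G.Adj f a ∧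
  ¬G.Adj a c ∧ ¬G.Adj a d ∧ ¬G.Adj a e ∧
  ¬G.Adj b d ∧ ¬G.Adj b e ∧ ¬G.Adj b f ∧
  ¬G.Adj c e ∧ ¬G.Adj c f ∧ ¬G.Adj d f

/-- `d₂(G)`: the set of vertices of degree two. -/
def d2 (G : SimpleGraph V) : Set V := {v | (G.neighborSet v).ncard = 2}

/-- `𝓜(G)`: the set of edges `uv` such that there are `x ∈ N(u) ∩ d₂(G)` and
`y ∈ N(v) ∩ d₂(G)` so that the edges `xu, uv, vy` lie on a common induced 6-cycle of `G`. -/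
def mSet (G : SimpleGraph V) : Set (Sym2 V) :=
  {e | ∃ u v x y w t : V, e = s(u, v) ∧
    x ∈ G.neighborSet u ∩ d2 G ∧ y ∈ G.neighborSet v ∩ d2 G ∧
    IsInducedC6 G x u v y w t}


section Aux
variable {G : SimpleGraph V}

lemma matching_ncard [Fintype V] (M : G.Subgraph) (hM : M.IsMatching) :
    M.verts.ncard = 2 * M.edgeSet.ncard := by
  classical
  let p : V → V := fun v => if h : v ∈ M.verts then (hM h).choose else v
  have hp : ∀ v (h : v ∈ M.verts), M.Adj v (p v) := by
    intro v h; simp only [p, dif_pos h]; exact (hM h).choose_spec.1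
  have hpu : ∀ v (h : v ∈ M.verts) (w : V), M.Adj v w → w = p v := by
    intro v h w hw
    simp only [p, dif_pos h]; exact (hM h).choose_spec.2 w hw
  let f : V → Sym2 V := fun v => s(v, p v)
  have hmaps : ∀ v ∈ M.verts.toFinset, f v ∈ M.edgeSet.toFinset := by
    intro v hv
    rw [Set.mem_toFinset] at *
    exact (hp v hv)
  have := Finset.card_eq_sum_card_fiberwise hmaps
  rw [Set.ncard_eq_toFinset_card', Set.ncard_eq_toFinset_card', this, Finset.sum_congr rfl
    (g := fun _ => 2), Finset.sum_const, smul_eq_mul, mul_comm]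
  intro e he
  rw [Set.mem_toFinset] at he
  induction e with
  | h a b =>
    have hab : M.Adj a b := he
    have ha : a ∈ M.verts := M.edge_vert hab
    have hb : b ∈ M.verts := M.edge_vert hab.symm
    have hpa : p a = b := (hpu a ha b hab).symm
    have hpb : p b = a := (hpu b hb a hab.symm).symm
    have hne : a ≠ b := hab.ne
    have : Finset.filter (fun v => f v = s(a, b)) M.verts.toFinset = {a, b} := by
      ext v
      simp only [Finset.mem_filter, Set.mem_toFinset, Finset.mem_insert, Finset.mem_singleton]
      constructor
      · rintro ⟨hv, hfv⟩
        have : v ∈ s(a,b) := by rw [← hfv]; exact Sym2.mem_mk_left _ _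
        rw [Sym2.mem_iff] at this
        exact this
      · rintro (rfl | rfl)
        · exact ⟨ha, by simp [f, hpa]⟩
        · exact ⟨hb, by simp [f, hpb, Sym2.eq_swap]⟩
    rw [this, Finset.card_insert_of_notMem (by simpa using hne), Finset.card_singleton]

lemma exists_maximal_matching [Fintype V] (G : SimpleGraph V) :
    ∃ M : G.Subgraph, IsMaximalMatching G M := by
  classical
  set B : Set ℕ := {n | ∃ M : G.Subgraph, M.IsMatching ∧ M.edgeSet.ncard = n} with hB
  have hne : B.Nonempty := ⟨0, ⊥, by intro v hv; simp at hv, by simp⟩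
  have hbdd : BddAbove B := by
    refine ⟨Fintype.card (Sym2 V), ?_⟩
    rintro n ⟨M, _, rfl⟩
    calc M.edgeSet.ncard ≤ (Set.univ : Set (Sym2 V)).ncard :=
          Set.ncard_le_ncard (Set.subset_univ _) (Set.toFinite _)
      _ = Fintype.card (Sym2 V) := by rw [Set.ncard_univ, Nat.card_eq_fintype_card]
  obtain ⟨M, hM, hcard⟩ := Nat.sSup_mem hne hbdd
  refine ⟨M, hM, fun M' hM' hsub => ?_⟩
  have h1 : M'.edgeSet.ncard ≤ sSup B := le_csSup hbdd ⟨M', hM', rfl⟩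
  have h2 : M.edgeSet.ncard ≤ M'.edgeSet.ncard := Set.ncard_le_ncard hsub (Set.toFinite _)
  exact Set.eq_of_subset_of_ncard_le hsub (by omega) (Set.toFinite _)

lemma outside_indep (M : G.Subgraph) (hM : IsMaximalMatching G M)
    {x y : V} (hx : x ∉ M.verts) (hy : y ∉ M.verts) (hadj : G.Adj x y) : False := by
  have hsub : (G.subgraphOfAdj hadj).IsMatching := Subgraph.IsMatching.subgraphOfAdj hadj
  have hdisj : Disjoint M.support (G.subgraphOfAdj hadj).support := by
    rw [Set.disjoint_left]
    intro a haM haS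
    have h1 : a ∈ M.verts := M.support_subset_verts haM
    have h2 : a ∈ ({x, y} : Set V) := by
      have := (G.subgraphOfAdj hadj).support_subset_verts haS
      simpa using this
    rcases h2 with rfl | rfl
    · exact hx h1
    · exact hy h1
  have hsup : (M ⊔ G.subgraphOfAdj hadj).IsMatching := hM.1.sup hsub hdisj
  have hle : M.edgeSet ⊆ (M ⊔ G.subgraphOfAdj hadj).edgeSet :=
    Subgraph.edgeSet_mono le_sup_left
  have heq := hM.2 _ hsup hle
  have hmem : s(x, y) ∈ (M ⊔ G.subgraphOfAdj hadj).edgeSet := by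
    rw [Subgraph.mem_edgeSet]
    exact Subgraph.sup_adj.mpr (Or.inr (by simp))
  rw [← heq, Subgraph.mem_edgeSet] at hmem
  exact hx (M.edge_vert hmem)

end Aux

/-- Every finite graph `G` with no isolated vertices satisfying `γ_t(G) = 2 μ*(G)` has
minimum degree one or two. -/
theorem statement17 [Fintype V] [Nonempty V] (G : SimpleGraph V)
    (h : NoIsolated G) (heq : gammaT G = 2 * muStar G) :
    1 ≤ minDeg G ∧ minDeg G ≤ 2 := by
  classical
  have hdegset : ∀ v : V, (G.neighborSet v).ncard ∈ {k | ∃ v : V, (G.neighborSet v).ncard = k} :=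
    fun v => ⟨v, rfl⟩
  constructor
  · have hne : {k | ∃ v : V, (G.neighborSet v).ncard = k}.Nonempty :=
      ⟨_, hdegset (Classical.arbitrary V)⟩
    refine le_csInf hne ?_
    rintro k ⟨v, rfl⟩
    by_contra hk
    have h0 : (G.neighborSet v).ncard = 0 := by omega
    rw [Set.ncard_eq_zero (Set.toFinite _)] at h0
    obtain ⟨u, hu⟩ := h v
    exact absurd h0 (Set.nonempty_iff_ne_empty.mp ⟨u, hu⟩)
  · by_contra hδ
    push_neg at hδ
    have hdeg : ∀ v : V, 3 ≤ (G.neighborSet v).ncard := fun v => by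
      have h1 : minDeg G ≤ (G.neighborSet v).ncard := Nat.sInf_le (hdegset v)
      omega
    -- obtain a minimum maximal matching
    have hAne : {n | ∃ M : G.Subgraph, IsMaximalMatching G M ∧ M.edgeSet.ncard = n}.Nonempty := by
      obtain ⟨M, hM⟩ := exists_maximal_matching G
      exact ⟨_, M, hM, rfl⟩
    obtain ⟨M, hMmax, hMcard⟩ :
        ∃ M : G.Subgraph, IsMaximalMatching G M ∧ M.edgeSet.ncard = muStar G :=
      Nat.sInf_mem hAne
    set S : Set V := M.verts with hS
    -- partner function
    let p : V → V := fun v => if h : v ∈ S then (hMmax.1 h).choose else v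
    have hp : ∀ v ∈ S, M.Adj v (p v) := by
      intro v h; simp only [p, dif_pos h]; exact (hMmax.1 h).choose_spec.1
    have hpu : ∀ v ∈ S, ∀ w, M.Adj v w → w = p v := by
      intro v h w hw
      simp only [p, dif_pos h]; exact (hMmax.1 h).choose_spec.2 w hw
    have hpS : ∀ v ∈ S, p v ∈ S := fun v h => M.edge_vert (hp v h).symm
    have hpG : ∀ v ∈ S, G.Adj v (p v) := fun v h => M.adj_sub (hp v h)
    have hpinv : ∀ v ∈ S, p (p v) = v := fun v h =>
      ((hpu (p v) (hpS v h) v (hp v h).symm)).symm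
    have hpne : ∀ v ∈ S, p v ≠ v := fun v h => (hpG v h).ne'
    -- outside vertices have all neighbors inside
    have hout : ∀ x, x ∉ S → ∀ y, G.Adj x y → y ∈ S := by
      intro x hx y hxy
      by_contra hy
      exact outside_indep M hMmax hx hy hxy
    -- S is a total dominating set
    have hTDS : IsTotalDomSet G S := by
      intro v
      by_cases hv : v ∈ S
      · exact ⟨p v, hpS v hv, hpG v hv⟩
      · obtain ⟨u, hu⟩ := h v
        exact ⟨u, hout v hv u hu, hu⟩
    have hgamma_le : ∀ T : Set V, IsTotalDomSet G T → gammaT G ≤ T.ncard :=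
      fun T hT => Nat.sInf_le ⟨T, hT, rfl⟩
    have hScard : S.ncard = 2 * muStar G := by
      rw [hS, matching_ncard M hMmax.1, hMcard]
    have hSne : S.Nonempty := by
      obtain ⟨u, hu, _⟩ := hTDS (Classical.arbitrary V)
      exact ⟨u, hu⟩
    have hgammaS : gammaT G = S.ncard := by rw [heq, hScard]
    have hS1 : 1 ≤ S.ncard := (Set.ncard_pos (Set.toFinite _)).mpr hSne
    -- key fact : inside S, the only neighbor of p u is u
    have hF5 : ∀ u ∈ S, ∀ w ∈ S, G.Adj (p u) w → w = u := by
      intro u hu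
      have hnotT : ¬ IsTotalDomSet G (S \ {u}) := by
        intro hT
        have hle := hgamma_le _ hT
        rw [Set.ncard_diff_singleton_of_mem hu] at hle
        omega
      simp only [IsTotalDomSet] at hnotT
      push_neg at hnotT
      obtain ⟨x, hx⟩ := hnotT
      have hxonly : ∀ w ∈ S, G.Adj x w → w = u := by
        intro w hw hadj
        by_contra hne
        exact hx w ⟨hw, hne⟩ hadj
      obtain ⟨w₀, hw₀S, hw₀⟩ := hTDS x
      have hxu : G.Adj x u := by rwa [hxonly w₀ hw₀S hw₀] at hw₀
      have hxS : x ∈ S := by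
        by_contra hxS
        have hsub : G.neighborSet x ⊆ {u} := by
          intro w hw
          exact hxonly w (hout x hxS w hw) hw
        have := (Set.ncard_le_ncard hsub (Set.toFinite _)).trans_eq (Set.ncard_singleton u)
        have := hdeg x
        omega
      -- x is matched to u, so x = p u
      have hpxu : p x = u := hxonly (p x) (hpS x hxS) (hpG x hxS)
      have hxpu : x = p u := hpu u hu x ((hpxu ▸ hp x hxS).symm)
      intro w hw hadj
      rw [← hxpu] at hadj
      exact hxonly w hw hadj
    have hF5' : ∀ v ∈ S, ∀ w ∈ S, G.Adj v w → w = p v := by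
      intro v hv w hw hadj
      exact hF5 (p v) (hpS v hv) w hw (by rwa [hpinv v hv])
    -- every vertex of S has an outside neighbor
    have hinout : ∀ v ∈ S, ∃ a, a ∉ S ∧ G.Adj v a := by
      intro v hv
      by_contra hno
      push_neg at hno
      have hsub : G.neighborSet v ⊆ {p v} := by
        intro w hw
        have hwS : w ∈ S := by
          by_contra hwS
          exact (hno w hwS hw).elim
        exact hF5' v hv w hwS hw
      have := (Set.ncard_le_ncard hsub (Set.toFinite _)).trans_eq (Set.ncard_singleton _)
      have := hdeg v
      omega
    have hgamma1 : 1 ≤ gammaT G := by omega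
    by_cases hcom : ∃ u v z : V, M.Adj u v ∧ G.Adj z u ∧ G.Adj z v
    · -- case A : an edge of M with a common neighbor
      obtain ⟨u, v, z, hMuv, hzu, hzv⟩ := hcom
      have hu : u ∈ S := M.edge_vert hMuv
      have hv : v ∈ S := M.edge_vert hMuv.symm
      have huv : u ≠ v := (M.adj_sub hMuv).ne
      have hpuv : p u = v := (hpu u hu v hMuv).symm
      have hpvu : p v = u := (hpu v hv u hMuv.symm).symm
      have hz : z ∉ S := by
        intro hzS
        have h1 := hF5' z hzS u hu hzu
        have h2 := hF5' z hzS v hv hzv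
        exact huv (h1.trans h2.symm)
      set T : Set V := insert z (S \ {u, v}) with hT
      have hTdom : IsTotalDomSet G T := by
        intro x
        by_cases hxS : x ∈ S
        · by_cases hxu : x = u
          · exact ⟨z, Set.mem_insert _ _, hxu ▸ hzu.symm⟩
          by_cases hxv : x = v
          · exact ⟨z, Set.mem_insert _ _, hxv ▸ hzv.symm⟩
          refine ⟨p x, Set.mem_insert_of_mem _ ⟨hpS x hxS, ?_⟩, hpG x hxS⟩
          simp only [Set.mem_insert_iff, Set.mem_singleton_iff]
          push_neg
          constructor
          · intro hcon
            exact hxv (by rw [← hpinv x hxS, hcon, hpuv])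
          · intro hcon
            exact hxu (by rw [← hpinv x hxS, hcon, hpvu])
        · have hsub : ¬ G.neighborSet x ⊆ {u, v} := by
            intro hsub
            have h1 := Set.ncard_le_ncard hsub (Set.toFinite _)
            have h2 : ({u, v} : Set V).ncard ≤ 2 :=
              (Set.ncard_insert_le _ _).trans (by simp)
            have := hdeg x
            omega
          rw [Set.not_subset] at hsub
          obtain ⟨w, hw, hwuv⟩ := hsub
          exact ⟨w, Set.mem_insert_of_mem _ ⟨hout x hxS w hw, hwuv⟩, hw⟩
      have hTcard : T.ncard ≤ S.ncard - 1 := by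
        have hzT : z ∉ S \ {u, v} := fun hcon => hz hcon.1
        have hsub : ({u, v} : Set V) ⊆ S := by
          intro w hw
          rcases hw with rfl | hw
          · exact hu
          · rw [Set.mem_singleton_iff] at hw; exact hw ▸ hv
        have hdiff : (S \ {u, v}).ncard = S.ncard - 2 := by
          rw [Set.ncard_diff hsub (Set.toFinite _), Set.ncard_pair huv]
        have h2S : 2 ≤ S.ncard := by
          have := Set.ncard_le_ncard hsub (Set.toFinite _)
          rw [Set.ncard_pair huv] at this
          omega
        rw [hT, Set.ncard_insert_of_notMem hzT (Set.toFinite _), hdiff]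
        omega
      have := hgamma_le T hTdom
      omega
    · -- case B : no edge of M has a common neighbor
      push_neg at hcom
      obtain ⟨u, hu⟩ := hSne
      set v : V := p u with hv_def
      have hv : v ∈ S := hpS u hu
      have hMuv : M.Adj u v := hp u hu
      have huv : u ≠ v := (M.adj_sub hMuv).ne
      have hpvu : p v = u := (hpu v hv u hMuv.symm).symm
      obtain ⟨a, haS, hua⟩ := hinout u hu
      have hau : G.Adj a u := hua.symm
      have hav : ¬ G.Adj a v := hcom u v a hMuv hau
      -- a has a neighbor q outside {u, v}
      have hq : ∃ q, G.Adj a q ∧ q ≠ u ∧ q ≠ v := by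
        by_contra hno
        push_neg at hno
        have hsub : G.neighborSet a ⊆ {u, v} := by
          intro w hw
          rw [SimpleGraph.mem_neighborSet] at hw
          by_cases h1 : w = u
          · exact h1 ▸ Set.mem_insert _ _
          · exact (hno w hw h1) ▸ Set.mem_insert_of_mem _ rfl
        have h1 := Set.ncard_le_ncard hsub (Set.toFinite _)
        have h2 : ({u, v} : Set V).ncard ≤ 2 := (Set.ncard_insert_le _ _).trans (by simp)
        have := hdeg a
        omega
      obtain ⟨q, haq, hqu, hqv⟩ := hq
      have hqS : q ∈ S := hout a haS q haq
      set q' : V := p q with hq'_def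
      have hq'S : q' ∈ S := hpS q hqS
      have hMqq' : M.Adj q q' := hp q hqS
      have hqq' : q ≠ q' := (M.adj_sub hMqq').ne
      have hpq'q : p q' = q := (hpu q' hq'S q hMqq'.symm).symm
      have hq'u : q' ≠ u := by
        intro hcon
        exact hqv (by rw [← hpq'q, hcon, hv_def])
      have hq'v : q' ≠ v := by
        intro hcon
        apply hqu
        rw [← hpq'q, hcon, hpvu]
      have haq' : ¬ G.Adj a q' := hcom q q' a hMqq' haq
      obtain ⟨b, hbS, hvb⟩ := hinout v hv
      obtain ⟨d, hdS, hq'd⟩ := hinout q' hq'S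
      -- no outside vertex sees more than 2 of {u, v, q, q'}
      have hkey : ∀ x, x ∉ S → ∃ w, G.Adj x w ∧ w ∉ ({u, v, q, q'} : Set V) := by
        intro x hxS
        by_contra hno
        push_neg at hno
        set c1 : V := if G.Adj x u then u else v with hc1
        set c2 : V := if G.Adj x q then q else q' with hc2
        have hsub : G.neighborSet x ⊆ {c1, c2} := by
          intro w hw
          rw [SimpleGraph.mem_neighborSet] at hw
          have hw4 := hno w hw
          simp only [Set.mem_insert_iff, Set.mem_singleton_iff] at hw4
          rcases hw4 with h | h | h | h
          · have : c1 = w := by rw [hc1, if_pos (h ▸ hw), h]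
            exact this ▸ Set.mem_insert _ _
          · have hxu : ¬ G.Adj x u := fun hxu => hcom u v x hMuv hxu (h ▸ hw)
            have : c1 = w := by rw [hc1, if_neg hxu, h]
            exact this ▸ Set.mem_insert _ _
          · have : c2 = w := by rw [hc2, if_pos (h ▸ hw), h]
            exact this ▸ Set.mem_insert_of_mem _ rfl
          · have hxq : ¬ G.Adj x q := fun hxq => hcom q q' x hMqq' hxq (h ▸ hw)
            have : c2 = w := by rw [hc2, if_neg hxq, h]
            exact this ▸ Set.mem_insert_of_mem _ rfl
        have h1 := Set.ncard_le_ncard hsub (Set.toFinite _)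
        have h2 : ({c1, c2} : Set V).ncard ≤ 2 := (Set.ncard_insert_le _ _).trans (by simp)
        have := hdeg x
        omega
      set T : Set V := insert a (insert b (insert d (S \ {u, v, q, q'}))) with hT
      have hmemT : ∀ w, w ∈ S → w ≠ u → w ≠ v → w ≠ q → w ≠ q' → w ∈ T := by
        intro w hw h1 h2 h3 h4
        refine Set.mem_insert_of_mem _ (Set.mem_insert_of_mem _ (Set.mem_insert_of_mem _ ?_))
        refine ⟨hw, ?_⟩
        simp only [Set.mem_insert_iff, Set.mem_singleton_iff]
        push_neg
        exact ⟨h1, h2, h3, h4⟩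
      have haT : a ∈ T := Set.mem_insert _ _
      have hbT : b ∈ T := Set.mem_insert_of_mem _ (Set.mem_insert _ _)
      have hdT : d ∈ T := Set.mem_insert_of_mem _ (Set.mem_insert_of_mem _ (Set.mem_insert _ _))
      have hTdom : IsTotalDomSet G T := by
        intro x
        by_cases hxS : x ∈ S
        · by_cases hxu : x = u
          · exact ⟨a, haT, hxu ▸ hua⟩
          by_cases hxv : x = v
          · exact ⟨b, hbT, hxv ▸ hvb⟩
          by_cases hxq : x = q
          · exact ⟨a, haT, hxq ▸ haq.symm⟩
          by_cases hxq' : x = q'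
          · exact ⟨d, hdT, hxq' ▸ hq'd⟩
          refine ⟨p x, hmemT (p x) (hpS x hxS) ?_ ?_ ?_ ?_, hpG x hxS⟩
          · intro hcon; exact hxv (by rw [← hpinv x hxS, hcon, hv_def])
          · intro hcon; exact hxu (by rw [← hpinv x hxS, hcon, hpvu])
          · intro hcon; exact hxq' (by rw [← hpinv x hxS, hcon, hq'_def])
          · intro hcon; exact hxq (by rw [← hpinv x hxS, hcon, hpq'q])
        · obtain ⟨w, hxw, hw4⟩ := hkey x hxS
          simp only [Set.mem_insert_iff, Set.mem_singleton_iff] at hw4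
          push_neg at hw4
          exact ⟨w, hmemT w (hout x hxS w hxw) hw4.1 hw4.2.1 hw4.2.2.1 hw4.2.2.2, hxw⟩
      -- cardinality of T
      have huq : u ≠ q := fun hcon => hqu hcon.symm
      have huq' : u ≠ q' := fun hcon => hq'u hcon.symm
      have hvq : v ≠ q := fun hcon => hqv hcon.symm
      have hvq' : v ≠ q' := fun hcon => hq'v hcon.symm
      have h4sub : ({u, v, q, q'} : Set V) ⊆ S := by
        intro w hw
        simp only [Set.mem_insert_iff, Set.mem_singleton_iff] at hw
        rcases hw with rfl | rfl | rfl | rfl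
        · exact hu
        · exact hv
        · exact hqS
        · exact hq'S
      have h4card : ({u, v, q, q'} : Set V).ncard = 4 := by
        rw [Set.ncard_insert_of_notMem (by simp [huv, huq, huq']) (Set.toFinite _),
          Set.ncard_insert_of_notMem (by simp [hvq, hvq']) (Set.toFinite _),
          Set.ncard_pair hqq']
      have h4S : 4 ≤ S.ncard := by
        have := Set.ncard_le_ncard h4sub (Set.toFinite _)
        omega
      have hdiff : (S \ {u, v, q, q'}).ncard = S.ncard - 4 := by
        rw [Set.ncard_diff h4sub (Set.toFinite _), h4card]
      have hTcard : T.ncard ≤ S.ncard - 1 := by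
        have e1 : T.ncard ≤ (insert b (insert d (S \ {u, v, q, q'}))).ncard + 1 :=
          Set.ncard_insert_le _ _
        have e2 : (insert b (insert d (S \ {u, v, q, q'}))).ncard ≤
            (insert d (S \ {u, v, q, q'})).ncard + 1 := Set.ncard_insert_le _ _
        have e3 : (insert d (S \ {u, v, q, q'})).ncard ≤ (S \ {u, v, q, q'}).ncard + 1 :=
          Set.ncard_insert_le _ _
        omega
      have := hgamma_le T hTdom
      omega

end TotalDomMM
end

section
/- Let G be a finite simple graph with no isolated vertices satisfying γ_t(G) = 2μ*(G), let M be a maximal matching of G of minimum cardinality, and let v ∈ V(M) be such that M_p(v) is not a support vertex of G. Then M_p(v) is the unique neighbor of v among the vertices of V(M), i.e., N(v) ∩ V(M) = {M_p(v)}. -/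
/-!
Suppose `v` had a neighbour `u ≠ w` in `V(M)`. Then `V(M) \ {w}` is still a total dominating
set: `v` is dominated by `u`, every other vertex of `V(M)` by its partner, and a vertex outside
`V(M)` has all its neighbours in `V(M)` by maximality, one of them different from `w` since `w`
is not a support vertex. This set has `2|M| - 1 = 2μ*(G) - 1 < γ_t(G)` elements.
-/

open SimpleGraph

namespace TotalDomMM

variable {V : Type*}

theorem _root_.SimpleGraph.Subgraph.IsMatching.ncard_verts [Finite V] {G : SimpleGraph V}
    {M : G.Subgraph} (hM : M.IsMatching) : M.verts.ncard = 2 * M.edgeSet.ncard := by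
  have : Fintype M.edgeSet := Fintype.ofFinite _
  have hfiber (e : M.edgeSet) : Nat.card {x // hM.toEdge x = e} = 2 := by
    obtain ⟨⟨u, v⟩, huv⟩ := e
    change Nat.card (hM.toEdge ⁻¹' {⟨s(u, v), huv⟩}) = 2
    rw [hM.toEdge_preimage_singleton huv, Nat.card_coe_set_eq, Set.ncard_pair]
    exact fun h ↦ huv.ne (congrArg Subtype.val h)
  rw [← Nat.card_coe_set_eq, ← Nat.card_coe_set_eq,
    ← Nat.card_congr (Equiv.sigmaFiberEquiv hM.toEdge), Nat.card_sigma]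
  simp [hfiber, Nat.card_eq_fintype_card, mul_comm]

theorem IsMaximalMatching.mem_verts_of_adj {G : SimpleGraph V} {M : G.Subgraph}
    (hM : IsMaximalMatching G M) {x y : V} (hx : x ∉ M.verts) (hxy : G.Adj x y) :
    y ∈ M.verts := by
  by_contra hy
  have hdisj : Disjoint M.support (G.subgraphOfAdj hxy).support := by
    rw [hM.1.support_eq_verts, support_subgraphOfAdj, Set.disjoint_right]
    rintro a (rfl | rfl) <;> assumption
  have hedge : s(x, y) ∈ (M ⊔ G.subgraphOfAdj hxy).edgeSet := by simp
  rw [← hM.2 _ (hM.1.sup (.subgraphOfAdj hxy) hdisj) (by simp)] at hedge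
  exact hx (M.edge_vert hedge)

theorem NoIsolated.exists_adj_ne {G : SimpleGraph V} (hG : NoIsolated G) {w : V}
    (hw : w ∉ supSet G) (x : V) : ∃ y, G.Adj x y ∧ y ≠ w := by
  by_contra! hleaf
  obtain ⟨y, hxy⟩ := hG x
  have hxw : G.Adj x w := hleaf y hxy ▸ hxy
  have hnbr : G.neighborSet x = {w} := Set.eq_singleton_iff_unique_mem.mpr ⟨hxw, hleaf⟩
  exact hw ⟨x, hxw.symm, by rw [hnbr, Set.ncard_singleton]⟩

theorem gammaT_le_ncard {G : SimpleGraph V} {S : Set V} (hS : IsTotalDomSet G S) :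
    gammaT G ≤ S.ncard :=
  Nat.sInf_le ⟨S, hS, rfl⟩

theorem isTotalDomSet_verts_diff_partner {G : SimpleGraph V} (hG : NoIsolated G)
    {M : G.Subgraph} (hM : IsMaximalMatching G M) {v w u : V} (hvw : M.Adj v w)
    (hw : w ∉ supSet G) (hu : u ∈ M.verts) (hvu : G.Adj v u) (huw : u ≠ w) :
    IsTotalDomSet G (M.verts \ {w}) := by
  intro x
  by_cases hx : x ∈ M.verts
  · obtain ⟨x', hxx', -⟩ := hM.1 hx
    by_cases hx'w : x' = w
    · subst hx'w
      obtain rfl : x = v := hM.1.eq_of_adj_right hxx' hvw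
      exact ⟨u, ⟨hu, huw⟩, hvu⟩
    · exact ⟨x', ⟨hxx'.snd_mem, hx'w⟩, hxx'.adj_sub⟩
  · obtain ⟨y, hxy, hyw⟩ := hG.exists_adj_ne hw x
    exact ⟨y, ⟨hM.mem_verts_of_adj hx hxy, hyw⟩, hxy⟩

/-- Let `G` be a finite graph with no isolated vertices satisfying `γ_t(G) = 2 μ*(G)`,
let `M` be a maximal matching of minimum cardinality, and let `v ∈ V(M)` be such that its
partner `w = M_p v` is not a support vertex. Then `w` is the unique neighbor of `v` among
the vertices of `V(M)`. -/
theorem statement18 [Fintype V] (G : SimpleGraph V) (h : NoIsolated G)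
    (heq : gammaT G = 2 * muStar G)
    (M : G.Subgraph) (hM : IsMaximalMatching G M) (hmin : M.edgeSet.ncard = muStar G)
    (v w : V) (hvw : M.Adj v w) (hw : w ∉ supSet G) :
    G.neighborSet v ∩ M.verts = {w} := by
  refine Set.eq_singleton_iff_unique_mem.mpr ⟨⟨hvw.adj_sub, hvw.snd_mem⟩, ?_⟩
  rintro u ⟨hvu, hu⟩
  by_contra huw
  have hdom := gammaT_le_ncard (isTotalDomSet_verts_diff_partner h hM hvw hw hu hvu huw)
  have hlt : (M.verts \ {w}).ncard < M.verts.ncard :=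
    Set.ncard_sdiff_singleton_lt_of_mem hvw.snd_mem
  rw [hM.1.ncard_verts, hmin, ← heq] at hlt
  exact hlt.not_ge hdom

end TotalDomMM
end
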